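/- arXiv:1307.2975 — 4 statements merged into one kernel-verified Lean document; each statement's English description precedes it below -/
import Mathlib

section
/- Let q : ℝ → ℂ be continuous, let z ∈ ℝ, and set U(x) := −i z σ₃ + Q(q(x)). If φ : ℝ → M₂(ℂ) is differentiable with φ′(x) = U(x) φ(x) for all x ∈ ℝ and φ(0) = I (the 2×2 identity matrix), then for every x ∈ ℝ the matrix φ(x) is invertible and φ(x)⁻¹ equals the conjugate transpose φ(x)ᴴ. -/
open MeasureTheory Matrix ENNReal Filter

noncomputable section

/-- The Pauli matrix `σ₃ = diag(1, -1)`. -/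
def sigma3 : Matrix (Fin 2) (Fin 2) ℂ := !![1, 0; 0, -1]

/-- `Q(w)` : the off-diagonal matrix with `(1,2)`-entry `w` and `(2,1)`-entry `-conj w`. -/
def Qm (w : ℂ) : Matrix (Fin 2) (Fin 2) ℂ := !![0, w; -(starRingEnd ℂ w), 0]

/-- The Hermitian inner product `⟨u,v⟩ = conj u₁ * v₁ + conj u₂ * v₂` on `ℂ²`. -/
def inn (u v : Fin 2 → ℂ) : ℂ := starRingEnd ℂ (u 0) * v 0 + starRingEnd ℂ (u 1) * v 1

/-- The outer product `u ⊗ conj v`. -/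
def outer (u v : Fin 2 → ℂ) : Matrix (Fin 2) (Fin 2) ℂ :=
  Matrix.of fun a b => u a * starRingEnd ℂ (v b)

/-- The Gramian matrix `M_{k,j} = -i ⟨s_j, s_k⟩ / (conj z_k - z_j)`. -/
def gram {n : ℕ} (z : Fin n → ℂ) (s : Fin n → Fin 2 → ℂ) : Matrix (Fin n) (Fin n) ℂ :=
  Matrix.of fun k j => -Complex.I * inn (s j) (s k) / (starRingEnd ℂ (z k) - z j)

/-- The `(j,k)`-cofactor `D_{j,k}` of a square matrix. -/
def cof {n : ℕ} (A : Matrix (Fin n) (Fin n) ℂ) (j k : Fin n) : ℂ := A.adjugate k j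

/-- The linear system (L1): `i s_k = ∑_j (⟨s_j,s_k⟩/(conj z_k - z_j)) r_j`. -/
def L1sys {n : ℕ} (z : Fin n → ℂ) (s r : Fin n → Fin 2 → ℂ) : Prop :=
  ∀ k, Complex.I • s k = ∑ j, (inn (s j) (s k) / (starRingEnd ℂ (z k) - z j)) • r j

/-- The linear system (L2): `i r_k = ∑_j (⟨r_j,r_k⟩/(conj z_j - z_k)) s_j`. -/
def L2sys {n : ℕ} (z : Fin n → ℂ) (s r : Fin n → Fin 2 → ℂ) : Prop :=
  ∀ k, Complex.I • r k = ∑ j, (inn (r j) (r k) / (starRingEnd ℂ (z j) - z k)) • s j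

/-- A classical solution of the cubic NLS equation `i q_t + q_xx + 2 |q|² q = 0`;
functions of `(x, t)` are encoded as `q : ℝ → ℝ → ℂ`, `x` first. -/
def IsClassicalNLS (q : ℝ → ℝ → ℂ) : Prop :=
  (∀ t, ContDiff ℝ 2 fun x => q x t) ∧ (∀ x, ContDiff ℝ 1 fun t => q x t) ∧
    ∀ x t, Complex.I * deriv (fun τ => q x τ) t + deriv (deriv fun y => q y t) x
      + 2 * ((‖q x t‖ : ℝ) : ℂ) ^ 2 * q x t = 0

/-- The `x`-part Lax matrix `U = -i z σ₃ + Q(w)`. -/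
def Ux (z w : ℂ) : Matrix (Fin 2) (Fin 2) ℂ := (-(Complex.I * z)) • sigma3 + Qm w

/-- The `t`-part Lax matrix `V = i(|w|² - 2z²) σ₃ + 2 z Q(w) - i Q(w_x) σ₃`. -/
def Vt (z w wx : ℂ) : Matrix (Fin 2) (Fin 2) ℂ :=
  (Complex.I * (((‖w‖ : ℝ) : ℂ) ^ 2 - 2 * z ^ 2)) • sigma3 + (2 * z) • Qm w
    - Complex.I • (Qm wx * sigma3)

/-- The dressed potential `q = q₀ - (2/D) ∑_{k,j} D_{j,k} s_{j,1} conj (s_{k,2})` (pointwise). -/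
def dressQ {n : ℕ} (z : Fin n → ℂ) (q0 : ℂ) (s : Fin n → Fin 2 → ℂ) : ℂ :=
  q0 - 2 / (gram z s).det *
    ∑ k, ∑ j, cof (gram z s) j k * s j 0 * starRingEnd ℂ (s k 1)

/-- `Σ^S` of the 2-soliton, as a function of the phases `φ₁, φ₂, ψ₁, ψ₂`. -/
def SigmaSof (η₁ η₂ ξ₁ ξ₂ φ₁ φ₂ ψ₁ ψ₂ : ℝ) : ℂ :=
  (Complex.exp (-2*(η₂:ℂ)*(φ₂:ℂ) + 2*Complex.I*(ψ₁:ℂ)) +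
      Complex.exp (2*(η₂:ℂ)*(φ₂:ℂ) + 2*Complex.I*(ψ₁:ℂ))) / (2*(η₂:ℂ))
  + (Complex.exp (-2*(η₁:ℂ)*(φ₁:ℂ) + 2*Complex.I*(ψ₂:ℂ)) +
      Complex.exp (2*(η₁:ℂ)*(φ₁:ℂ) + 2*Complex.I*(ψ₂:ℂ))) / (2*(η₁:ℂ))
  - (Complex.exp (-2*(η₂:ℂ)*(φ₂:ℂ) + 2*Complex.I*(ψ₁:ℂ)) +
      Complex.exp (2*(η₁:ℂ)*(φ₁:ℂ) + 2*Complex.I*(ψ₂:ℂ))) /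
        ((η₁:ℂ) + (η₂:ℂ) + Complex.I*((ξ₁:ℂ) - (ξ₂:ℂ)))
  - (Complex.exp (-2*(η₁:ℂ)*(φ₁:ℂ) + 2*Complex.I*(ψ₂:ℂ)) +
      Complex.exp (2*(η₂:ℂ)*(φ₂:ℂ) + 2*Complex.I*(ψ₁:ℂ))) /
        ((η₁:ℂ) + (η₂:ℂ) - Complex.I*((ξ₁:ℂ) - (ξ₂:ℂ)))

/-- `D^S` of the 2-soliton, as a function of the phases `φ₁, φ₂, ψ₁, ψ₂`. -/
def DSof (η₁ η₂ ξ₁ ξ₂ φ₁ φ₂ ψ₁ ψ₂ : ℝ) : ℂ :=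
  (Complex.exp (-2*(η₁:ℂ)*(φ₁:ℂ)) + Complex.exp (2*(η₁:ℂ)*(φ₁:ℂ))) *
      (Complex.exp (-2*(η₂:ℂ)*(φ₂:ℂ)) + Complex.exp (2*(η₂:ℂ)*(φ₂:ℂ))) / (4*(η₁:ℂ)*(η₂:ℂ))
  - (Complex.exp (-(η₁:ℂ)*(φ₁:ℂ) - (η₂:ℂ)*(φ₂:ℂ) + Complex.I*((ψ₁:ℂ) - (ψ₂:ℂ))) +
      Complex.exp ((η₁:ℂ)*(φ₁:ℂ) + (η₂:ℂ)*(φ₂:ℂ) - Complex.I*((ψ₁:ℂ) - (ψ₂:ℂ)))) *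
    (Complex.exp (-(η₁:ℂ)*(φ₁:ℂ) - (η₂:ℂ)*(φ₂:ℂ) - Complex.I*((ψ₁:ℂ) - (ψ₂:ℂ))) +
      Complex.exp ((η₁:ℂ)*(φ₁:ℂ) + (η₂:ℂ)*(φ₂:ℂ) + Complex.I*((ψ₁:ℂ) - (ψ₂:ℂ)))) /
    (((η₁:ℂ) + (η₂:ℂ))^2 + ((ξ₁:ℂ) - (ξ₂:ℂ))^2)

/-- The phase `φ = x + 4 ξ t - x_c`. -/
def phiSol (ξ xc x t : ℝ) : ℝ := x + 4*ξ*t - xc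

/-- The phase `ψ = θ - ξ (x + 2 ξ t - x_c) + 2 η² t`. -/
def psiSol (θ ξ xc η x t : ℝ) : ℝ := θ - ξ*(x + 2*ξ*t - xc) + 2*η^2*t

/-- `D^S(x,t)` for the 2-soliton with parameters `η₁, η₂, ξ₁, ξ₂, x₁, x₂, θ₁, θ₂`. -/
def twoSolitonD (η₁ η₂ ξ₁ ξ₂ x₁ x₂ θ₁ θ₂ x t : ℝ) : ℂ :=
  DSof η₁ η₂ ξ₁ ξ₂ (phiSol ξ₁ x₁ x t) (phiSol ξ₂ x₂ x t)
    (psiSol θ₁ ξ₁ x₁ η₁ x t) (psiSol θ₂ ξ₂ x₂ η₂ x t)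

/-- `Σ^S(x,t)` for the 2-soliton. -/
def twoSolitonSigma (η₁ η₂ ξ₁ ξ₂ x₁ x₂ θ₁ θ₂ x t : ℝ) : ℂ :=
  SigmaSof η₁ η₂ ξ₁ ξ₂ (phiSol ξ₁ x₁ x t) (phiSol ξ₂ x₂ x t)
    (psiSol θ₁ ξ₁ x₁ η₁ x t) (psiSol θ₂ ξ₂ x₂ η₂ x t)

/-- The 2-soliton `q^S = 2 Σ^S / D^S`. -/
def twoSoliton (η₁ η₂ ξ₁ ξ₂ x₁ x₂ θ₁ θ₂ x t : ℝ) : ℂ :=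
  2 * twoSolitonSigma η₁ η₂ ξ₁ ξ₂ x₁ x₂ θ₁ θ₂ x t / twoSolitonD η₁ η₂ ξ₁ ξ₂ x₁ x₂ θ₁ θ₂ x t

/-- The separable (Jost-type) form
`s = e^{-i conj z (x - x_j) - 2 i conj z² t + i θ_j} f - e^{i conj z (x - x_j) + 2 i conj z² t - i θ_j} g`. -/
def jost (zj : ℂ) (xj θj : ℝ) (f g : ℝ → ℝ → Fin 2 → ℂ) (x t : ℝ) : Fin 2 → ℂ :=
  Complex.exp (-(Complex.I) * starRingEnd ℂ zj * ((x:ℂ) - (xj:ℂ))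
      - 2*Complex.I*(starRingEnd ℂ zj)^2*(t:ℂ) + Complex.I*(θj:ℂ)) • f x t
  - Complex.exp (Complex.I * starRingEnd ℂ zj * ((x:ℂ) - (xj:ℂ))
      + 2*Complex.I*(starRingEnd ℂ zj)^2*(t:ℂ) - Complex.I*(θj:ℂ)) • g x t

/-- The pair of eigenvalues `z_j = ξ_j + i η_j`, `j = 1, 2`. -/
def zvec (ξ₁ η₁ ξ₂ η₂ : ℝ) : Fin 2 → ℂ :=
  ![(ξ₁:ℂ) + (η₁:ℂ)*Complex.I, (ξ₂:ℂ) + (η₂:ℂ)*Complex.I]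

/-- The two vector functions `s₁, s₂` in separable form. -/
def sJ (ξ₁ η₁ ξ₂ η₂ x₁ x₂ θ₁ θ₂ : ℝ) (f g : Fin 2 → ℝ → ℝ → Fin 2 → ℂ) (j : Fin 2)
    (x t : ℝ) : Fin 2 → ℂ :=
  jost (zvec ξ₁ η₁ ξ₂ η₂ j) (![x₁, x₂] j) (![θ₁, θ₂] j) (f j) (g j) x t

/-- The explicit vector solutions used to build the `n`-soliton from `q₀ = 0`. -/
def solS {n : ℕ} (z : Fin n → ℂ) (xs θ : Fin n → ℝ) (j : Fin n) (x t : ℝ) : Fin 2 → ℂ :=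
  ![Complex.exp (-(Complex.I) * starRingEnd ℂ (z j) * ((x:ℂ) - ((xs j : ℝ):ℂ))
      - 2*Complex.I*(starRingEnd ℂ (z j))^2*(t:ℂ) + Complex.I*((θ j : ℝ):ℂ)),
    -Complex.exp (Complex.I * starRingEnd ℂ (z j) * ((x:ℂ) - ((xs j : ℝ):ℂ))
      + 2*Complex.I*(starRingEnd ℂ (z j))^2*(t:ℂ) - Complex.I*((θ j : ℝ):ℂ))]

/-- The `n`-soliton with parameters `{ξ_j, η_j, x_j, θ_j}`. -/
def nSoliton {n : ℕ} (ξ η xs θ : Fin n → ℝ) (x t : ℝ) : ℂ :=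
  dressQ (fun j => (ξ j : ℂ) + (η j : ℂ)*Complex.I) 0
    (fun j => solS (fun j => (ξ j : ℂ) + (η j : ℂ)*Complex.I) xs θ j x t)

/-!
The Lax matrix `U = -i z σ₃ + Q(q)` is skew-Hermitian when `z` is real, so for any solution of
`φ' = U φ` the Gram matrix `φᴴ φ` has derivative `(Uφ)ᴴ φ + φᴴ U φ = φᴴ (Uᴴ + U) φ = 0`.
Hence `φᴴ φ` is constant, equal to `φ(0)ᴴ φ(0) = 1`.
-/

theorem Ux_conjTranspose (z : ℝ) (w : ℂ) : (Ux z w)ᴴ = -Ux z w := by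
  ext i j
  fin_cases i <;> fin_cases j <;>
    simp [Ux, sigma3, Qm, conjTranspose_apply, mul_comm]

section GramConstant

variable {𝕜 n : Type*} [RCLike 𝕜] [Fintype n]

theorem hasDerivAt_conjTranspose_mul_self_apply {φ : ℝ → Matrix n n 𝕜} {φ' : Matrix n n 𝕜}
    {x : ℝ} (hφ : ∀ i j, HasDerivAt (fun y => φ y i j) (φ' i j) x) (i j : n) :
    HasDerivAt (fun y => ((φ y)ᴴ * φ y) i j) ((φ'ᴴ * φ x + (φ x)ᴴ * φ') i j) x := by
  simp only [Matrix.add_apply, mul_apply, conjTranspose_apply, ← Finset.sum_add_distrib]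
  exact HasDerivAt.fun_sum fun k _ => (hφ k i).star.fun_mul (hφ k j)

theorem conjTranspose_mul_self_eq_of_hasDerivAt_skewHermitian {φ A : ℝ → Matrix n n 𝕜}
    (hA : ∀ x, (A x)ᴴ = -A x)
    (hφ : ∀ x i j, HasDerivAt (fun y => φ y i j) ((A x * φ x) i j) x) (x y : ℝ) :
    (φ x)ᴴ * φ x = (φ y)ᴴ * φ y := by
  have hderiv : ∀ t i j, HasDerivAt (fun s => ((φ s)ᴴ * φ s) i j) 0 t := by
    intro t i j
    convert hasDerivAt_conjTranspose_mul_self_apply (hφ t) i j using 1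
    rw [conjTranspose_mul, hA, Matrix.mul_neg, Matrix.neg_mul, Matrix.mul_assoc, neg_add_cancel,
      Matrix.zero_apply]
  ext i j
  exact is_const_of_deriv_eq_zero (fun t => (hderiv t i j).differentiableAt)
    (fun t => (hderiv t i j).deriv) x y

end GramConstant

theorem stmt_0_general (q : ℝ → ℂ) (z : ℝ)
    (φ : ℝ → Matrix (Fin 2) (Fin 2) ℂ)
    (hφ : ∀ x i j, HasDerivAt (fun y => φ y i j) ((Ux (z : ℂ) (q x) * φ x) i j) x)
    (hφ0 : φ 0 = 1) :
    ∀ x, IsUnit (φ x) ∧ (φ x)⁻¹ = (φ x).conjTranspose := by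
  intro x
  have hleft : (φ x)ᴴ * φ x = 1 := by
    rw [conjTranspose_mul_self_eq_of_hasDerivAt_skewHermitian
      (fun y => Ux_conjTranspose z (q y)) hφ x 0, hφ0, conjTranspose_one, Matrix.one_mul]
  exact ⟨IsUnit.of_mul_eq_one _ (mul_eq_one_comm.mp hleft), inv_eq_left_inv hleft⟩

/-- If `φ` solves `φ' = (-i z σ₃ + Q(q)) φ` with real spectral parameter `z` and `φ(0) = I`,
then `φ(x)` is invertible with inverse its conjugate transpose. -/
theorem stmt_0 (q : ℝ → ℂ) (hq : Continuous q) (z : ℝ)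
    (φ : ℝ → Matrix (Fin 2) (Fin 2) ℂ)
    (hφ : ∀ x i j, HasDerivAt (fun y => φ y i j) ((Ux (z : ℂ) (q x) * φ x) i j) x)
    (hφ0 : φ 0 = 1) :
    ∀ x, IsUnit (φ x) ∧ (φ x)⁻¹ = (φ x).conjTranspose :=
  stmt_0_general q z φ hφ hφ0
end
end

section
/- Let n ≥ 1, let z₁,…,z_n ∈ ℂ be distinct with Im z_k > 0 for each k, and let s₁,…,s_n ∈ ℂ² be such that the Gramian matrix M is invertible. Then M is Hermitian (so D := det M is real and nonzero), and with r_k := Σ_{j=1}^n (D_{j,k}/D) s_j (the unique solution of the linear system (L1)), the 2×2 matrix Σ_{k=1}^n ( (r_k ⊗ conj(s_k)) σ₃ − σ₃ (s_k ⊗ conj(r_k)) ) equals Q(w), where w := −(2/D) Σ_{k=1}^n Σ_{j=1}^n D_{j,k} s_{j,1} conj(s_{k,2}); in particular this matrix has zero diagonal entries. -/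
open MeasureTheory Matrix ENNReal Filter

noncomputable section

/-! Let `S` be the `n × 2` matrix with rows `s_k`. The coefficients of `r` are those of `M⁻¹`, so
`R = M⁻¹ S` and `P := ∑ₖ r_k ⊗ conj s_k = (Sᴴ M⁻¹ S)ᵀ`, which is Hermitian because `M` is.
The sum in question is `P σ₃ - σ₃ Pᴴ = P σ₃ - σ₃ P`, and for Hermitian `P` this is `Q(-2 P₁₂)`. -/

open Finset

lemma Matrix.IsHermitian.det_im_eq_zero {ι : Type*} [Fintype ι] [DecidableEq ι]
    {A : Matrix ι ι ℂ} (hA : A.IsHermitian) : A.det.im = 0 := by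
  rw [← Complex.conj_eq_iff_im, ← Complex.star_def, ← det_conjTranspose, hA.eq]

lemma conj_inn (u v : Fin 2 → ℂ) : starRingEnd ℂ (inn u v) = inn v u := by
  simp only [inn, map_add, map_mul, Complex.conj_conj]
  ring

lemma gram_isHermitian {n : ℕ} (z : Fin n → ℂ) (s : Fin n → Fin 2 → ℂ) :
    (gram z s).IsHermitian := by
  ext k j
  simp only [conjTranspose_apply, _root_.gram, of_apply, ← starRingEnd_apply, map_div₀, map_mul,
    map_neg, map_sub, Complex.conj_I, Complex.conj_conj, conj_inn]
  rw [← neg_sub (z j), div_neg]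
  ring

lemma outer_conjTranspose (u v : Fin 2 → ℂ) : (outer u v)ᴴ = outer v u := by
  ext a b
  simp [outer, mul_comm]

lemma sum_outer_eq_transpose_conjTranspose_mul {n : ℕ} (r s : Fin n → Fin 2 → ℂ) :
    ∑ k, outer (r k) (s k) = ((of s)ᴴ * of r)ᵀ := by
  ext a b
  simp [Matrix.sum_apply, outer, mul_apply, mul_comm]

lemma conjTranspose_sum_outer {n : ℕ} (r s : Fin n → Fin 2 → ℂ) :
    (∑ k, outer (r k) (s k))ᴴ = ∑ k, outer (s k) (r k) := by
  simp only [conjTranspose_sum, outer_conjTranspose]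

lemma mul_sigma3_sub_sigma3_mul {P : Matrix (Fin 2) (Fin 2) ℂ} (hP : P.IsHermitian) :
    P * sigma3 - sigma3 * P = Qm (-2 * P 0 1) := by
  have h10 : P 1 0 = starRingEnd ℂ (P 0 1) := by
    simpa using (congr_fun₂ hP.eq 1 0).symm
  ext a b
  rw [Matrix.sub_apply, mul_apply, mul_apply]
  fin_cases a <;> fin_cases b <;>
    simp only [Fin.zero_eta, Fin.mk_one, Fin.isValue, sigma3, Qm, of_apply, cons_val',
      cons_val_zero, cons_val_one, cons_val_fin_one, Fin.sum_univ_two, h10, map_neg, map_mul,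
      map_ofNat] <;>
    ring

lemma of_eq_inv_mul_of_cof_div_det {n : ℕ} (A : Matrix (Fin n) (Fin n) ℂ) (s r : Fin n → Fin 2 → ℂ)
    (hr : ∀ k i, r k i = ∑ j, cof A j k / A.det * s j i) : of r = A⁻¹ * of s := by
  ext k i
  simp [hr, Matrix.inv_def, mul_apply, cof, Ring.inverse_eq_inv', div_eq_inv_mul, mul_assoc]

theorem stmt_4_general (n : ℕ) (z : Fin n → ℂ) (s : Fin n → Fin 2 → ℂ) (hM : IsUnit (gram z s))
    (r : Fin n → Fin 2 → ℂ)
    (hr : ∀ k i, r k i = ∑ j, cof (gram z s) j k / (gram z s).det * s j i) :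
    (gram z s).IsHermitian ∧ ((gram z s).det).im = 0 ∧ (gram z s).det ≠ 0 ∧
      ∑ k, (outer (r k) (s k) * sigma3 - sigma3 * outer (s k) (r k)) =
        Qm (-(2 / (gram z s).det) *
          ∑ k, ∑ j, cof (gram z s) j k * s j 0 * starRingEnd ℂ (s k 1)) := by
  set A := gram z s
  have hA : A.IsHermitian := gram_isHermitian z s
  set P := ∑ k, outer (r k) (s k) with hPdef
  have hP : P.IsHermitian := by
    rw [hPdef, sum_outer_eq_transpose_conjTranspose_mul, of_eq_inv_mul_of_cof_div_det A s r hr,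
      ← Matrix.mul_assoc]
    exact (isHermitian_conjTranspose_mul_mul _ hA.inv).transpose
  have hP01 : P 0 1 = (∑ k, ∑ j, cof A j k * s j 0 * starRingEnd ℂ (s k 1)) / A.det := by
    simp only [hPdef, Matrix.sum_apply, outer, of_apply, hr, sum_mul, sum_div]
    exact sum_congr rfl fun k _ => sum_congr rfl fun j _ => by ring
  refine ⟨hA, hA.det_im_eq_zero, ((isUnit_iff_isUnit_det A).mp hM).ne_zero, ?_⟩
  rw [sum_sub_distrib, ← sum_mul, ← mul_sum, ← conjTranspose_sum_outer r s, hP.eq,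
    mul_sigma3_sub_sigma3_mul hP, hP01]
  congr 1
  ring

/-- The Gramian is Hermitian with real nonzero determinant, and the reconstruction
matrix `∑_k (r_k ⊗ conj s_k σ₃ - σ₃ s_k ⊗ conj r_k)` equals `Q(w)` for the dressed potential
`w = -(2/D) ∑_{k,j} D_{j,k} s_{j,1} conj (s_{k,2})`. -/
theorem stmt_4 (n : ℕ) (hn : 1 ≤ n) (z : Fin n → ℂ) (hz : Function.Injective z)
    (him : ∀ k, 0 < (z k).im) (s : Fin n → Fin 2 → ℂ) (hM : IsUnit (gram z s))
    (r : Fin n → Fin 2 → ℂ)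
    (hr : ∀ k i, r k i = ∑ j, cof (gram z s) j k / (gram z s).det * s j i) :
    (gram z s).IsHermitian ∧ ((gram z s).det).im = 0 ∧ (gram z s).det ≠ 0 ∧
      ∑ k, (outer (r k) (s k) * sigma3 - sigma3 * outer (s k) (r k)) =
        Qm (-(2 / (gram z s).det) *
          ∑ k, ∑ j, cof (gram z s) j k * s j 0 * starRingEnd ℂ (s k 1)) :=
  stmt_4_general n z s hM r hr
end
end

section
/- Let q₀ be a classical solution of the cubic NLS equation, and let z₁,…,z_n ∈ ℂ be distinct with Im z_k > 0. Suppose s₁,…,s_n : ℝ×ℝ → ℂ² are continuously differentiable and satisfy both ∂_x s_k = −i conj(z_k) σ₃ s_k + Q(q₀) s_k and ∂_t s_k = i(|q₀|² − 2 conj(z_k)²) σ₃ s_k + 2 conj(z_k) Q(q₀) s_k − i Q(∂_x q₀) σ₃ s_k at every (x,t). Suppose the Gramian matrix M(x,t) of (z₁,…,z_n; s₁(x,t),…,s_n(x,t)) is invertible for all (x,t), let r_k(x,t) be the unique solution of the linear system (L1), and define q(x,t) := q₀(x,t) − (2/D(x,t)) Σ_{k,j=1}^n D_{j,k}(x,t)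 s_{j,1}(x,t) conj(s_{k,2}(x,t)). Then each r_k satisfies ∂_t r_k = i(|q|² − 2 z_k²) σ₃ r_k + 2 z_k Q(q) r_k − i Q(∂_x q) σ₃ r_k at every (x,t). -/
open MeasureTheory Matrix ENNReal Filter

noncomputable section

/-!
Write the system (L1) as `M rᵇ = sᵇ` for each component `b`, with `M` the Gramian. Differentiating
in `x` or `t`, with `s` solving the Lax pair of `q₀`, gives `M ∂rᵇ + (∂M) rᵇ = ∂sᵇ`; since `M` is
invertible, it suffices to check that the candidate `U(z_j, q) r_j` (resp. `V(z_j, q, q_x) r_j`)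
satisfies the same linear equation. That check is algebraic: by (L1) the `2 × 2` matrix
`P = ∑ⱼ sⱼ^* rⱼ` is Hermitian, `Z - Z^* = i P²` for `Z = ∑ⱼ zⱼ sⱼ^* rⱼ`, and Cramer's rule turns the
cofactor formula into `q = q₀ - 2 P₂₁`. The `x`-equation, proved first, gives
`q_x = q₀ₓ + 4i Z₂₁ - 2q P₂₂ + 2q₀ P₁₁`, which is what the `t`-equation needs.
-/

namespace NLSDressing

open Complex ComplexConjugate Finset

section MatrixCalculus

variable {𝕜 𝔸 ι : Type*} [NontriviallyNormedField 𝕜] [NormedField 𝔸] [NormedAlgebra 𝕜 𝔸]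
  [Fintype ι] [DecidableEq ι] {M : 𝕜 → Matrix ι ι 𝔸} {x : 𝕜}

lemma differentiableAt_det (hM : ∀ i j, DifferentiableAt 𝕜 (fun u => M u i j) x) :
    DifferentiableAt 𝕜 (fun u => (M u).det) x := by
  simp only [det_apply']
  exact DifferentiableAt.fun_sum fun σ _ =>
    (DifferentiableAt.fun_finsetProd fun i _ => hM (σ i) i).const_mul _

lemma differentiableAt_inv_apply (hM : ∀ i j, DifferentiableAt 𝕜 (fun u => M u i j) x)
    (hdet : (M x).det ≠ 0) (i j : ι) :
    DifferentiableAt 𝕜 (fun u => (M u)⁻¹ i j) x := by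
  have hadj : DifferentiableAt 𝕜 (fun u => (M u).adjugate i j) x := by
    simp only [adjugate_apply]
    refine differentiableAt_det fun a b => ?_
    rcases eq_or_ne a j with rfl | haj
    · simp [updateRow_apply]
    · simpa [updateRow_apply, haj] using hM a b
  have hinv : (fun u => (M u)⁻¹ i j) = fun u => ((M u).det)⁻¹ * (M u).adjugate i j :=
    funext fun u => by rw [Matrix.inv_def, Matrix.smul_apply, Ring.inverse_eq_inv, smul_eq_mul]
  rw [hinv]
  exact ((differentiableAt_det hM).inv hdet).mul hadj

end MatrixCalculus

variable {n : ℕ}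

lemma Ux_mulVec_zero (ζ w : ℂ) (v : Fin 2 → ℂ) :
    (Ux ζ w *ᵥ v) 0 = -(I * ζ) * v 0 + w * v 1 := by
  simp [Ux, Qm, sigma3, mulVec, dotProduct]

lemma Ux_mulVec_one (ζ w : ℂ) (v : Fin 2 → ℂ) :
    (Ux ζ w *ᵥ v) 1 = -conj w * v 0 + I * ζ * v 1 := by
  simp [Ux, Qm, sigma3, mulVec, dotProduct]

lemma Vt_mulVec_zero (ζ w wx : ℂ) (v : Fin 2 → ℂ) :
    (Vt ζ w wx *ᵥ v) 0 = I * (w * conj w - 2 * ζ ^ 2) * v 0 + (2 * ζ * w + I * wx) * v 1 := by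
  simp [Vt, Qm, sigma3, mulVec, dotProduct, mul_conj']

lemma Vt_mulVec_one (ζ w wx : ℂ) (v : Fin 2 → ℂ) :
    (Vt ζ w wx *ᵥ v) 1
      = (-(2 * ζ * conj w) + I * conj wx) * v 0 - I * (w * conj w - 2 * ζ ^ 2) * v 1 := by
  simp [Vt, Qm, sigma3, mulVec, dotProduct, mul_conj']
  ring

lemma conj_inn (u v : Fin 2 → ℂ) : conj (inn u v) = inn v u := by
  simp only [inn, map_add, map_mul, conj_conj]
  ring

lemma conj_sub_ne_zero_of_im_pos {z : Fin n → ℂ} (him : ∀ k, 0 < (z k).im) (k j : Fin n) :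
    conj (z k) - z j ≠ 0 := fun h => by
  have := congrArg im h
  simp only [sub_im, conj_im, zero_im] at this
  linarith [him k, him j]

lemma gram_apply_mul_eq {z : Fin n → ℂ} (hd : ∀ k j, conj (z k) - z j ≠ 0)
    (S : Fin n → Fin 2 → ℂ) (k j : Fin n) :
    gram z S k j * z j = conj (z k) * gram z S k j + I * inn (S j) (S k) := by
  simp only [_root_.gram, of_apply]
  field_simp [hd k j]
  ring

def gramDeriv (z : Fin n → ℂ) (S DS : Fin n → Fin 2 → ℂ) : Matrix (Fin n) (Fin n) ℂ :=
  of fun k j => -I * (inn (DS j) (S k) + inn (S j) (DS k)) / (conj (z k) - z j)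

lemma hasDerivAt_gram {z : Fin n → ℂ} {S : ℝ → Fin n → Fin 2 → ℂ} {DS : Fin n → Fin 2 → ℂ}
    {t : ℝ} (hS : ∀ k, HasDerivAt (fun u => S u k) (DS k) t) (k j : Fin n) :
    HasDerivAt (fun u => gram z (S u) k j) (gramDeriv z (S t) DS k j) t := by
  have hconj : ∀ a, HasDerivAt (fun u => conj (S u j a)) (conj (DS j a)) t := fun a => by
    simpa only [← starRingEnd_apply] using (hasDerivAt_pi.mp (hS j) a).star
  have hSk := fun a => hasDerivAt_pi.mp (hS k) a
  have hinn : HasDerivAt (fun u => inn (S u j) (S u k))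
      (inn (DS j) (S t k) + inn (S t j) (DS k)) t :=
    (((hconj 0).mul (hSk 0)).add ((hconj 1).mul (hSk 1))).congr_deriv (by simp only [inn]; ring)
  exact (hinn.const_mul (-I)).div_const _

lemma gramDeriv_Ux {z : Fin n → ℂ} (hd : ∀ k j, conj (z k) - z j ≠ 0) (S : Fin n → Fin 2 → ℂ)
    (w : ℂ) (k j : Fin n) :
    gramDeriv z S (fun j => Ux (conj (z j)) w *ᵥ S j) k j
      = -(conj (S j 0) * S k 0 - conj (S j 1) * S k 1) := by
  rw [gramDeriv, of_apply, div_eq_iff (hd k j)]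
  simp only [inn, Ux_mulVec_zero, Ux_mulVec_one, map_add, map_mul, map_neg, conj_I, conj_conj]
  linear_combination (conj (z k) - z j) * (conj (S j 0) * S k 0 - conj (S j 1) * S k 1) * I_sq

lemma gramDeriv_Vt {z : Fin n → ℂ} (hd : ∀ k j, conj (z k) - z j ≠ 0) (S : Fin n → Fin 2 → ℂ)
    (w wx : ℂ) (k j : Fin n) :
    gramDeriv z S (fun j => Vt (conj (z j)) w wx *ᵥ S j) k j
      = -2 * (conj (z k) + z j) * (conj (S j 0) * S k 0 - conj (S j 1) * S k 1)
        - 2 * I * (conj (S j 0) * w * S k 1 - conj (S j 1) * conj w * S k 0) := by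
  rw [gramDeriv, of_apply, div_eq_iff (hd k j)]
  simp only [inn, Vt_mulVec_zero, Vt_mulVec_one, map_add, map_sub, map_mul, map_neg, map_pow,
    map_ofNat, conj_I, conj_conj]
  linear_combination
    2 * (conj (z k) ^ 2 - z j ^ 2) * (conj (S j 0) * S k 0 - conj (S j 1) * S k 1) * I_sq

def pairing (S R : Fin n → Fin 2 → ℂ) : Matrix (Fin 2) (Fin 2) ℂ :=
  of fun a b => ∑ j, conj (S j a) * R j b

def zPairing (z : Fin n → ℂ) (S R : Fin n → Fin 2 → ℂ) : Matrix (Fin 2) (Fin 2) ℂ :=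
  of fun a b => ∑ j, z j * (conj (S j a) * R j b)

lemma pairing_apply (S R : Fin n → Fin 2 → ℂ) (a b : Fin 2) :
    pairing S R a b = ∑ j, conj (S j a) * R j b := rfl

lemma zPairing_apply (z : Fin n → ℂ) (S R : Fin n → Fin 2 → ℂ) (a b : Fin 2) :
    zPairing z S R a b = ∑ j, z j * (conj (S j a) * R j b) := rfl

lemma pairing_Ux_mulVec_add (z : Fin n → ℂ) (q q0 : ℂ) (S R : Fin n → Fin 2 → ℂ) :
    pairing (fun m => Ux (conj (z m)) q0 *ᵥ S m) R 1 0
      + pairing S (fun m => Ux (z m) q *ᵥ R m) 1 0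
      = -2 * I * zPairing z S R 1 0 + q * pairing S R 1 1 - q0 * pairing S R 0 0 := by
  simp only [pairing_apply, zPairing_apply, Ux_mulVec_zero, Ux_mulVec_one, ← sum_add_distrib,
    mul_sum, ← sum_sub_distrib]
  refine sum_congr rfl fun m _ => ?_
  simp only [map_add, map_mul, map_neg, conj_I, conj_conj]
  ring

lemma hasDerivAt_pairing {S R : ℝ → Fin n → Fin 2 → ℂ} {DS DR : Fin n → Fin 2 → ℂ} {x : ℝ}
    (hS : ∀ m, HasDerivAt (fun y => S y m) (DS m) x)
    (hR : ∀ m, HasDerivAt (fun y => R y m) (DR m) x) (a b : Fin 2) :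
    HasDerivAt (fun y => pairing (S y) (R y) a b)
      (pairing DS (R x) a b + pairing (S x) DR a b) x := by
  simp only [pairing_apply, ← sum_add_distrib]
  refine HasDerivAt.fun_sum fun m _ => ?_
  have hconj : HasDerivAt (fun y => conj (S y m a)) (conj (DS m a)) x := by
    simpa only [← starRingEnd_apply] using (hasDerivAt_pi.mp (hS m) a).star
  exact hconj.mul (hasDerivAt_pi.mp (hR m) b)

namespace L1sys

variable {z : Fin n → ℂ} {S R : Fin n → Fin 2 → ℂ}

lemma apply_eq (hL : L1sys z S R) (k : Fin n) (b : Fin 2) :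
    I * S k b = ∑ j, inn (S j) (S k) / (conj (z k) - z j) * R j b := by
  simpa [Finset.sum_apply] using congrFun (hL k) b

lemma gram_mulVec (hL : L1sys z S R) (b : Fin 2) :
    gram z S *ᵥ (fun j => R j b) = fun k => S k b := by
  funext k
  have hsum : ∑ j, -I * inn (S j) (S k) / (conj (z k) - z j) * R j b
      = -I * ∑ j, inn (S j) (S k) / (conj (z k) - z j) * R j b := by
    rw [mul_sum]
    exact sum_congr rfl fun j _ => by ring
  simp only [mulVec, dotProduct, _root_.gram, of_apply]
  rw [hsum, ← apply_eq hL k b]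
  linear_combination -S k b * I_sq

lemma sum_gram_mul (hL : L1sys z S R) (k : Fin n) (b : Fin 2) :
    ∑ j, gram z S k j * R j b = S k b :=
  congrFun (gram_mulVec hL b) k

lemma conj_apply_eq (hL : L1sys z S R) (k : Fin n) (a : Fin 2) :
    I * conj (S k a) = ∑ j, inn (S k) (S j) / (conj (z j) - z k) * conj (R j a) := by
  have h := congrArg conj (apply_eq hL k a)
  simp only [map_mul, map_sum, map_div₀, conj_I, conj_inn, map_sub, conj_conj] at h
  rw [← neg_inj, ← neg_mul, h, ← sum_neg_distrib]
  exact sum_congr rfl fun j _ => by rw [← neg_sub, div_neg, neg_mul]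

lemma I_mul_sum_sub_sum_eq (hL : L1sys z S R) (g h : Fin n → ℂ) (a b : Fin 2) :
    I * (∑ k, g k * (conj (S k a) * R k b) - ∑ j, h j * (conj (R j a) * S j b))
      = ∑ j, ∑ k,
          (g k - h j) * (inn (S k) (S j) / (conj (z j) - z k)) * conj (R j a) * R k b := by
  have hg : I * ∑ k, g k * (conj (S k a) * R k b) = ∑ k, g k * (I * conj (S k a)) * R k b := by
    rw [mul_sum]; exact sum_congr rfl fun k _ => by ring
  have hh : I * ∑ j, h j * (conj (R j a) * S j b) = ∑ j, h j * conj (R j a) * (I * S j b) := by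
    rw [mul_sum]; exact sum_congr rfl fun j _ => by ring
  rw [mul_sub, hg, hh]
  simp only [conj_apply_eq hL, apply_eq hL, mul_sum, sum_mul]
  rw [sum_comm, ← sum_sub_distrib]
  exact sum_congr rfl fun j _ => by
    rw [← sum_sub_distrib]
    exact sum_congr rfl fun k _ => by ring

lemma pairing_comm (hL : L1sys z S R) : pairing S R = pairing R S := by
  ext a b
  have h := I_mul_sum_sub_sum_eq hL 1 1 a b
  simp only [Pi.one_apply, one_mul, sub_self, zero_mul, sum_const_zero, mul_eq_zero, I_ne_zero,
    false_or, sub_eq_zero] at h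
  exact h

lemma pairing_isHermitian (hL : L1sys z S R) : (pairing S R).IsHermitian := by
  ext a b
  rw [conjTranspose_apply, star_def, pairing_apply, map_sum, pairing_comm hL, pairing_apply]
  exact sum_congr rfl fun j _ => by rw [map_mul, conj_conj, mul_comm]

lemma conj_pairing (hL : L1sys z S R) (a b : Fin 2) :
    conj (pairing S R a b) = pairing S R b a := by
  rw [← star_def, ← conjTranspose_apply, pairing_isHermitian hL]

lemma zPairing_sub_conjTranspose (hL : L1sys z S R) (hd : ∀ k j, conj (z k) - z j ≠ 0) :
    zPairing z S R - (zPairing z S R)ᴴ = I • (pairing S R * pairing S R) := by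
  ext a b
  have h := I_mul_sum_sub_sum_eq hL z (fun j => conj (z j)) a b
  have hPP : (pairing S R * pairing S R) a b
      = ∑ j, ∑ k, inn (S k) (S j) * conj (R j a) * R k b := by
    nth_rewrite 1 [pairing_comm hL]
    simp only [mul_apply, Fin.sum_univ_two, pairing_apply, inn, sum_mul, mul_sum,
      ← sum_add_distrib]
    rw [sum_comm]
    exact sum_congr rfl fun j _ => sum_congr rfl fun k _ => by ring
  have hdiag : ∀ j k, (z k - conj (z j)) * (inn (S k) (S j) / (conj (z j) - z k))
      = -inn (S k) (S j) := fun j k => by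
    rw [← neg_sub, neg_mul, mul_div_cancel₀ _ (hd j k)]
  simp only [hdiag, neg_mul, sum_neg_distrib, ← hPP] at h
  have hZ : (zPairing z S R)ᴴ a b = ∑ j, conj (z j) * (conj (R j a) * S j b) := by
    rw [conjTranspose_apply, star_def, zPairing_apply, map_sum]
    exact sum_congr rfl fun j _ => by simp only [map_mul, conj_conj]; ring
  rw [Matrix.sub_apply, Matrix.smul_apply, smul_eq_mul, hZ, zPairing_apply]
  linear_combination -I * h + (∑ j, z j * (conj (S j a) * R j b)
    - ∑ j, conj (z j) * (conj (R j a) * S j b)) * I_sq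

lemma conj_zPairing (hL : L1sys z S R) (hd : ∀ k j, conj (z k) - z j ≠ 0) :
    conj (zPairing z S R 1 0) = zPairing z S R 0 1
      - I * (pairing S R 0 0 * pairing S R 0 1 + pairing S R 0 1 * pairing S R 1 1) := by
  have h := congrFun (congrFun (zPairing_sub_conjTranspose hL hd) 0) 1
  simp only [Matrix.sub_apply, conjTranspose_apply, star_def, Matrix.smul_apply, smul_eq_mul,
    mul_apply, Fin.sum_univ_two] at h
  linear_combination -h

lemma dressQ_eq (hM : IsUnit (gram z S)) (hL : L1sys z S R) (q0 : ℂ) :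
    dressQ z q0 S = q0 - 2 * pairing S R 1 0 := by
  have hdet : (gram z S).det ≠ 0 := ((isUnit_iff_isUnit_det _).mp hM).ne_zero
  have hcof : ∀ k, ∑ j, cof (gram z S) j k * S j 0 = (gram z S).det * R k 0 := fun k => by
    have h := congrFun (congrArg ((gram z S).adjugate *ᵥ ·) (gram_mulVec hL 0)) k
    simp only [mulVec_mulVec, adjugate_mul, smul_mulVec, one_mulVec] at h
    simpa [mulVec, dotProduct, cof] using h.symm
  have hsum : ∑ k, ∑ j, cof (gram z S) j k * S j 0 * conj (S k 1)
      = (gram z S).det * pairing S R 1 0 := by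
    rw [pairing_apply, mul_sum]
    exact sum_congr rfl fun k _ => by rw [← sum_mul, hcof]; ring
  rw [dressQ, hsum]
  field_simp

lemma gram_mulVec_Ux_add (hL : L1sys z S R) (hd : ∀ k j, conj (z k) - z j ≠ 0) {q q0 : ℂ}
    (hq : q = q0 - 2 * pairing S R 1 0) (b : Fin 2) :
    gram z S *ᵥ (fun j => (Ux (z j) q *ᵥ R j) b)
      + gramDeriv z S (fun j => Ux (conj (z j)) q0 *ᵥ S j) *ᵥ (fun j => R j b)
      = fun k => (Ux (conj (z k)) q0 *ᵥ S k) b := by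
  funext k
  have hG := fun j => gram_apply_mul_eq hd S k j
  simp only [inn] at hG
  revert b
  refine Fin.forall_fin_two.2 ⟨?_, ?_⟩
  · have hterm : ∀ j, gram z S k j * (-(I * z j) * R j 0 + q * R j 1)
        + -(conj (S j 0) * S k 0 - conj (S j 1) * S k 1) * R j 0
        = -(I * conj (z k)) * (gram z S k j * R j 0) + q * (gram z S k j * R j 1)
          + 2 * S k 1 * (conj (S j 1) * R j 0) := fun j => by
      linear_combination (-I * R j 0) * hG j
        - R j 0 * (conj (S j 0) * S k 0 + conj (S j 1) * S k 1) * I_sq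
    simp only [Pi.add_apply, Ux_mulVec_zero]
    simp only [mulVec_apply_eq_sum, gramDeriv_Ux hd]
    rw [← sum_add_distrib, sum_congr rfl fun j _ => hterm j]
    simp only [sum_add_distrib, ← mul_sum, sum_gram_mul hL, ← pairing_apply]
    rw [hq]
    ring
  · have hterm : ∀ j, gram z S k j * (-conj q * R j 0 + I * z j * R j 1)
        + -(conj (S j 0) * S k 0 - conj (S j 1) * S k 1) * R j 1
        = -conj q * (gram z S k j * R j 0) + I * conj (z k) * (gram z S k j * R j 1)
          - 2 * S k 0 * (conj (S j 0) * R j 1) := fun j => by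
      linear_combination (I * R j 1) * hG j
        + R j 1 * (conj (S j 0) * S k 0 + conj (S j 1) * S k 1) * I_sq
    simp only [Pi.add_apply, Ux_mulVec_one]
    simp only [mulVec_apply_eq_sum, gramDeriv_Ux hd]
    rw [← sum_add_distrib, sum_congr rfl fun j _ => hterm j]
    simp only [sum_add_distrib, sum_sub_distrib, ← mul_sum, sum_gram_mul hL, ← pairing_apply]
    rw [hq, map_sub, map_mul, map_ofNat, conj_pairing hL]
    ring

lemma gram_mulVec_Vt_add_apply_zero (hL : L1sys z S R) (hd : ∀ k j, conj (z k) - z j ≠ 0)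
    {q q0 qx q0x : ℂ} (hq : q = q0 - 2 * pairing S R 1 0)
    (hqx : qx = q0x + 4 * I * zPairing z S R 1 0 - 2 * q * pairing S R 1 1
      + 2 * q0 * pairing S R 0 0) (k : Fin n) :
    (gram z S *ᵥ (fun j => (Vt (z j) q qx *ᵥ R j) 0)
      + gramDeriv z S (fun j => Vt (conj (z j)) q0 q0x *ᵥ S j) *ᵥ (fun j => R j 0)) k
      = (Vt (conj (z k)) q0 q0x *ᵥ S k) 0 := by
  have hG := fun j => gram_apply_mul_eq hd S k j
  simp only [inn] at hG
  have hterm : ∀ j, gram z S k j * (I * (q * conj q - 2 * z j ^ 2) * R j 0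
        + (2 * z j * q + I * qx) * R j 1)
      + (-2 * (conj (z k) + z j) * (conj (S j 0) * S k 0 - conj (S j 1) * S k 1)
        - 2 * I * (conj (S j 0) * q0 * S k 1 - conj (S j 1) * conj q0 * S k 0)) * R j 0
      = I * (q * conj q - 2 * conj (z k) ^ 2) * (gram z S k j * R j 0)
        + (2 * q * conj (z k) + I * qx) * (gram z S k j * R j 1)
        + 4 * conj (z k) * S k 1 * (conj (S j 1) * R j 0)
        + 4 * S k 1 * (z j * (conj (S j 1) * R j 0))
        + 2 * I * q * S k 0 * (conj (S j 0) * R j 1)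
        + 2 * I * q * S k 1 * (conj (S j 1) * R j 1)
        - 2 * I * q0 * S k 1 * (conj (S j 0) * R j 0)
        + 2 * I * conj q0 * S k 0 * (conj (S j 1) * R j 0) := fun j => by
    linear_combination (-2 * I * R j 0 * (z j + conj (z k)) + 2 * q * R j 1) * hG j
      - 2 * R j 0 * (z j + conj (z k)) * (conj (S j 0) * S k 0 + conj (S j 1) * S k 1)
        * I_sq
  simp only [Pi.add_apply, Vt_mulVec_zero]
  simp only [mulVec_apply_eq_sum, gramDeriv_Vt hd]
  rw [← sum_add_distrib, sum_congr rfl fun j _ => hterm j]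
  simp only [sum_add_distrib, sum_sub_distrib, ← mul_sum, sum_gram_mul hL, ← pairing_apply,
    ← zPairing_apply]
  rw [hqx, hq, map_sub, map_mul, map_ofNat, conj_pairing hL]
  linear_combination 4 * zPairing z S R 1 0 * S k 1 * I_sq

lemma gram_mulVec_Vt_add_apply_one (hL : L1sys z S R) (hd : ∀ k j, conj (z k) - z j ≠ 0)
    {q q0 qx q0x : ℂ} (hq : q = q0 - 2 * pairing S R 1 0)
    (hqx : qx = q0x + 4 * I * zPairing z S R 1 0 - 2 * q * pairing S R 1 1
      + 2 * q0 * pairing S R 0 0) (k : Fin n) :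
    (gram z S *ᵥ (fun j => (Vt (z j) q qx *ᵥ R j) 1)
      + gramDeriv z S (fun j => Vt (conj (z j)) q0 q0x *ᵥ S j) *ᵥ (fun j => R j 1)) k
      = (Vt (conj (z k)) q0 q0x *ᵥ S k) 1 := by
  have hG := fun j => gram_apply_mul_eq hd S k j
  simp only [inn] at hG
  have hterm : ∀ j, gram z S k j * ((-(2 * z j * conj q) + I * conj qx) * R j 0
        - I * (q * conj q - 2 * z j ^ 2) * R j 1)
      + (-2 * (conj (z k) + z j) * (conj (S j 0) * S k 0 - conj (S j 1) * S k 1)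
        - 2 * I * (conj (S j 0) * q0 * S k 1 - conj (S j 1) * conj q0 * S k 0)) * R j 1
      = (-(2 * conj (z k) * conj q) + I * conj qx) * (gram z S k j * R j 0)
        - I * (q * conj q - 2 * conj (z k) ^ 2) * (gram z S k j * R j 1)
        - 4 * conj (z k) * S k 0 * (conj (S j 0) * R j 1)
        - 4 * S k 0 * (z j * (conj (S j 0) * R j 1))
        - 2 * I * conj q * S k 0 * (conj (S j 0) * R j 0)
        - 2 * I * conj q * S k 1 * (conj (S j 1) * R j 0)
        - 2 * I * q0 * S k 1 * (conj (S j 0) * R j 1)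
        + 2 * I * conj q0 * S k 0 * (conj (S j 1) * R j 1) := fun j => by
    linear_combination (-2 * conj q * R j 0 + 2 * I * R j 1 * (z j + conj (z k))) * hG j
      + 2 * R j 1 * (z j + conj (z k)) * (conj (S j 0) * S k 0 + conj (S j 1) * S k 1)
        * I_sq
  have hqc : conj q = conj q0 - 2 * pairing S R 0 1 := by
    rw [hq, map_sub, map_mul, map_ofNat, conj_pairing hL]
  have hqxc : conj qx = conj q0x - 4 * I * (zPairing z S R 0 1
        - I * (pairing S R 0 0 * pairing S R 0 1 + pairing S R 0 1 * pairing S R 1 1))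
      - 2 * conj q * pairing S R 1 1 + 2 * conj q0 * pairing S R 0 0 := by
    rw [hqx]
    simp only [map_add, map_sub, map_mul, map_ofNat, conj_I, conj_pairing hL,
      conj_zPairing hL hd]
    ring
  simp only [Pi.add_apply, Vt_mulVec_one]
  simp only [mulVec_apply_eq_sum, gramDeriv_Vt hd]
  rw [← sum_add_distrib, sum_congr rfl fun j _ => hterm j]
  simp only [sum_add_distrib, sum_sub_distrib, ← mul_sum, sum_gram_mul hL, ← pairing_apply,
    ← zPairing_apply]
  rw [hqxc, hqc, hq]
  linear_combination (4 * I * pairing S R 0 1 * (pairing S R 0 0 + pairing S R 1 1)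
    - 4 * zPairing z S R 0 1) * S k 0 * I_sq

lemma gram_mulVec_Vt_add (hL : L1sys z S R) (hd : ∀ k j, conj (z k) - z j ≠ 0)
    {q q0 qx q0x : ℂ} (hq : q = q0 - 2 * pairing S R 1 0)
    (hqx : qx = q0x + 4 * I * zPairing z S R 1 0 - 2 * q * pairing S R 1 1
      + 2 * q0 * pairing S R 0 0) (b : Fin 2) :
    gram z S *ᵥ (fun j => (Vt (z j) q qx *ᵥ R j) b)
      + gramDeriv z S (fun j => Vt (conj (z j)) q0 q0x *ᵥ S j) *ᵥ (fun j => R j b)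
      = fun k => (Vt (conj (z k)) q0 q0x *ᵥ S k) b := by
  revert b
  exact Fin.forall_fin_two.2 ⟨funext (gram_mulVec_Vt_add_apply_zero hL hd hq hqx),
    funext (gram_mulVec_Vt_add_apply_one hL hd hq hqx)⟩

end L1sys

lemma hasDerivAt_of_L1sys {z : Fin n → ℂ} {S R : ℝ → Fin n → Fin 2 → ℂ}
    {DS DR : Fin n → Fin 2 → ℂ} {t : ℝ}
    (hM : ∀ u, IsUnit (gram z (S u))) (hL : ∀ u, L1sys z (S u) (R u))
    (hS : ∀ k, HasDerivAt (fun u => S u k) (DS k) t)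
    (hDR : ∀ b, gram z (S t) *ᵥ (fun j => DR j b) + gramDeriv z (S t) DS *ᵥ (fun j => R t j b)
      = fun k => DS k b)
    (k : Fin n) : HasDerivAt (fun u => R u k) (DR k) t := by
  have hdet : ∀ u, IsUnit (gram z (S u)).det := fun u => (isUnit_iff_isUnit_det _).mp (hM u)
  have hR : ∀ u b, (fun j => R u j b) = (gram z (S u))⁻¹ *ᵥ fun j => S u j b := fun u b => by
    rw [← L1sys.gram_mulVec (hL u) b, mulVec_mulVec, nonsing_inv_mul _ (hdet u), one_mulVec]
  have hRdiff : ∀ j b, DifferentiableAt ℝ (fun u => R u j b) t := fun j b => by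
    rw [show (fun u => R u j b) = fun u => ((gram z (S u))⁻¹ *ᵥ fun i => S u i b) j
      from funext fun u => congrFun (hR u b) j]
    simp only [mulVec, dotProduct]
    exact DifferentiableAt.fun_sum fun i _ =>
      (differentiableAt_inv_apply (fun a c => (hasDerivAt_gram hS a c).differentiableAt)
        (hdet t).ne_zero j i).mul (hasDerivAt_pi.mp (hS i) b).differentiableAt
  refine hasDerivAt_pi.2 fun b => ?_
  have hprod : gram z (S t) *ᵥ (fun j => deriv (fun u => R u j b) t)
      + gramDeriv z (S t) DS *ᵥ (fun j => R t j b) = fun k => DS k b := by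
    funext k
    have hsum : HasDerivAt (fun u => ∑ j, gram z (S u) k j * R u j b)
        (∑ j, (gramDeriv z (S t) DS k j * R t j b
          + gram z (S t) k j * deriv (fun u => R u j b) t)) t :=
      HasDerivAt.fun_sum fun j _ => (hasDerivAt_gram hS k j).mul (hRdiff j b).hasDerivAt
    have hS' : (fun u => ∑ j, gram z (S u) k j * R u j b) = fun u => S u k b :=
      funext fun u => congrFun (L1sys.gram_mulVec (hL u) b) k
    rw [hS'] at hsum
    rw [← hsum.unique (hasDerivAt_pi.mp (hS k) b)]
    simp only [Pi.add_apply, mulVec, dotProduct, ← sum_add_distrib]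
    exact sum_congr rfl fun j _ => add_comm _ _
  have hderiv := mulVec_injective_iff_isUnit.mpr (hM t)
    (add_right_cancel (hprod.trans (hDR b).symm))
  rw [← congrFun hderiv k]
  exact (hRdiff k b).hasDerivAt

end NLSDressing

theorem stmt_9_general (n : ℕ) (q₀ : ℝ → ℝ → ℂ) (hq₀ : IsClassicalNLS q₀)
    (z : Fin n → ℂ) (him : ∀ k, 0 < (z k).im)
    (s : Fin n → ℝ → ℝ → Fin 2 → ℂ)
    (hsx : ∀ k x t, HasDerivAt (fun y => s k y t)
      ((Ux (starRingEnd ℂ (z k)) (q₀ x t)).mulVec (s k x t)) x)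
    (hst : ∀ k x t, HasDerivAt (fun τ => s k x τ)
      ((Vt (starRingEnd ℂ (z k)) (q₀ x t) (deriv (fun y => q₀ y t) x)).mulVec (s k x t)) t)
    (hM : ∀ x t, IsUnit (gram z fun k => s k x t))
    (r : Fin n → ℝ → ℝ → Fin 2 → ℂ)
    (hr : ∀ x t, L1sys z (fun k => s k x t) fun k => r k x t)
    (q : ℝ → ℝ → ℂ) (hq : ∀ x t, q x t = dressQ z (q₀ x t) fun k => s k x t) :
    ∀ k x t, HasDerivAt (fun τ => r k x τ)
      ((Vt (z k) (q x t) (deriv (fun y => q y t) x)).mulVec (r k x t)) t := by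
  open NLSDressing in
  intro k x t
  have hd := conj_sub_ne_zero_of_im_pos him
  have hqr : ∀ y τ, q y τ
      = q₀ y τ - 2 * pairing (fun m => s m y τ) (fun m => r m y τ) 1 0 :=
    fun y τ => (hq y τ).trans (L1sys.dressQ_eq (hM y τ) (hr y τ) _)
  have hrx : ∀ m, HasDerivAt (fun y => r m y t) (Ux (z m) (q x t) *ᵥ r m x t) x :=
    hasDerivAt_of_L1sys (S := fun y m => s m y t) (R := fun y m => r m y t)
      (fun y => hM y t) (fun y => hr y t) (fun m => hsx m x t)
      (L1sys.gram_mulVec_Ux_add (hr x t) hd (hqr x t))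
  have hq₀x : HasDerivAt (fun y => q₀ y t) (deriv (fun y => q₀ y t) x) x :=
    ((hq₀.1 t).differentiable two_ne_zero x).hasDerivAt
  have hqx : deriv (fun y => q y t) x = deriv (fun y => q₀ y t) x
      + 4 * Complex.I * zPairing z (fun m => s m x t) (fun m => r m x t) 1 0
      - 2 * q x t * pairing (fun m => s m x t) (fun m => r m x t) 1 1
      + 2 * q₀ x t * pairing (fun m => s m x t) (fun m => r m x t) 0 0 := by
    rw [funext fun y => hqr y t,
      (hq₀x.fun_sub ((hasDerivAt_pairing (fun m => hsx m x t) hrx 1 0).const_mul 2)).deriv,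
      pairing_Ux_mulVec_add]
    ring
  exact hasDerivAt_of_L1sys (S := fun τ m => s m x τ) (R := fun τ m => r m x τ)
    (fun τ => hM x τ) (fun τ => hr x τ) (fun m => hst m x t)
    (L1sys.gram_mulVec_Vt_add (hr x t) hd (hqr x t) hqx) k

/-- Time evolution of the dressing transformation: the `r_k` solve the `t`-part of the
Lax pair for the dressed potential `q`. -/
theorem stmt_9 (n : ℕ) (hn : 1 ≤ n) (q₀ : ℝ → ℝ → ℂ) (hq₀ : IsClassicalNLS q₀)
    (z : Fin n → ℂ) (hz : Function.Injective z) (him : ∀ k, 0 < (z k).im)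
    (s : Fin n → ℝ → ℝ → Fin 2 → ℂ)
    (hsC1 : ∀ k, ContDiff ℝ 1 fun p : ℝ × ℝ => s k p.1 p.2)
    (hsx : ∀ k x t, HasDerivAt (fun y => s k y t)
      ((Ux (starRingEnd ℂ (z k)) (q₀ x t)).mulVec (s k x t)) x)
    (hst : ∀ k x t, HasDerivAt (fun τ => s k x τ)
      ((Vt (starRingEnd ℂ (z k)) (q₀ x t) (deriv (fun y => q₀ y t) x)).mulVec (s k x t)) t)
    (hM : ∀ x t, IsUnit (gram z fun k => s k x t))
    (r : Fin n → ℝ → ℝ → Fin 2 → ℂ)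
    (hr : ∀ x t, L1sys z (fun k => s k x t) fun k => r k x t)
    (q : ℝ → ℝ → ℂ) (hq : ∀ x t, q x t = dressQ z (q₀ x t) fun k => s k x t) :
    ∀ k x t, HasDerivAt (fun τ => r k x τ)
      ((Vt (z k) (q x t) (deriv (fun y => q y t) x)).mulVec (r k x t)) t :=
  stmt_9_general n q₀ hq₀ z him s hsx hst hM r hr q hq
end
end

section
/- Let η₁, η₂ > 0 and ξ₁, ξ₂ ∈ ℝ, and set γ := 2η₁η₂((η₁+η₂)² + (ξ₁−ξ₂)²). Then for any real numbers φ₁, φ₂, ψ₁, ψ₂, the quantity D^S := (e^{−2η₁φ₁} + e^{2η₁φ₁})(e^{−2η₂φ₂} + e^{2η₂φ₂})/(4η₁η₂) − (e^{−η₁φ₁−η₂φ₂+i(ψ₁−ψ₂)} + e^{η₁φ₁+η₂φ₂−i(ψ₁−ψ₂)})(e^{−η₁φ₁−η₂φ₂−i(ψ₁−ψ₂)} + e^{η₁φ₁+η₂φ₂+i(ψ₁−ψ₂)})/((η₁+η₂)² + (ξ₁−ξ₂)²) is real and satisfies the identity γ · D^S = ((η₁−η₂)² + (ξ₁−ξ₂)²)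 cosh(2(η₁φ₁ + η₂φ₂)) + ((η₁+η₂)² + (ξ₁−ξ₂)²) cosh(2(η₁φ₁ − η₂φ₂)) − 4η₁η₂ cos(2(ψ₁ − ψ₂)). -/
open MeasureTheory Matrix ENNReal Filter

noncomputable section

/-! Writing `a = η₁φ₁`, `b = η₂φ₂`, `c = ψ₁ - ψ₂`, both products in `D^S` are of the form
`(e^{-u} + e^{u})(e^{-v} + e^{v}) = 2 cosh (u + v) + 2 cosh (u - v)`: with `u, v = 2a, 2b` for the
first one and `u, v = a + b ∓ ic` for the second, where `cosh (2ic) = cos (2c)`. Hence `D^S` is a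
real combination of `cosh (2(a + b))`, `cosh (2(a - b))` and `cos (2c)`, and clearing the
denominators `2η₁η₂` and `(η₁ + η₂)² + (ξ₁ - ξ₂)²` gives the identity. -/

open Complex in
theorem Complex.exp_neg_add_exp_mul_exp_neg_add_exp (u v : ℂ) :
    (exp (-u) + exp u) * (exp (-v) + exp v) = 2 * cosh (u + v) + 2 * cosh (u - v) := by
  simp only [two_cosh, add_mul, mul_add, ← exp_add, neg_add, neg_sub]
  ring_nf

open Complex in
theorem DSof_eq_ofReal (η₁ η₂ ξ₁ ξ₂ φ₁ φ₂ ψ₁ ψ₂ : ℝ) :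
    DSof η₁ η₂ ξ₁ ξ₂ φ₁ φ₂ ψ₁ ψ₂ =
      (((Real.cosh (2 * (η₁ * φ₁ + η₂ * φ₂)) + Real.cosh (2 * (η₁ * φ₁ - η₂ * φ₂))) /
          (2 * η₁ * η₂) -
        2 * (Real.cosh (2 * (η₁ * φ₁ + η₂ * φ₂)) + Real.cos (2 * (ψ₁ - ψ₂))) /
          ((η₁ + η₂) ^ 2 + (ξ₁ - ξ₂) ^ 2) : ℝ) : ℂ) := by
  have hmodulus :
      (exp (-2 * η₁ * φ₁) + exp (2 * η₁ * φ₁)) * (exp (-2 * η₂ * φ₂) + exp (2 * η₂ * φ₂)) =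
        2 * cosh (2 * (η₁ * φ₁ + η₂ * φ₂)) + 2 * cosh (2 * (η₁ * φ₁ - η₂ * φ₂)) := by
    simp only [neg_mul, exp_neg_add_exp_mul_exp_neg_add_exp]
    ring_nf
  have hphase :
      (exp (-η₁ * φ₁ - η₂ * φ₂ + I * (ψ₁ - ψ₂)) + exp (η₁ * φ₁ + η₂ * φ₂ - I * (ψ₁ - ψ₂))) *
          (exp (-η₁ * φ₁ - η₂ * φ₂ - I * (ψ₁ - ψ₂)) + exp (η₁ * φ₁ + η₂ * φ₂ + I * (ψ₁ - ψ₂))) =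
        2 * cosh (2 * (η₁ * φ₁ + η₂ * φ₂)) + 2 * cos (2 * (ψ₁ - ψ₂)) := by
    rw [show -η₁ * φ₁ - η₂ * φ₂ + I * (ψ₁ - ψ₂) = -(η₁ * φ₁ + η₂ * φ₂ - I * (ψ₁ - ψ₂)) by ring,
      show -η₁ * φ₁ - η₂ * φ₂ - I * (ψ₁ - ψ₂) = -(η₁ * φ₁ + η₂ * φ₂ + I * (ψ₁ - ψ₂)) by ring,
      exp_neg_add_exp_mul_exp_neg_add_exp,
      show η₁ * φ₁ + η₂ * φ₂ - I * (ψ₁ - ψ₂) - (η₁ * φ₁ + η₂ * φ₂ + I * (ψ₁ - ψ₂)) =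
        -(2 * (ψ₁ - ψ₂)) * I by ring,
      cosh_mul_I, cos_neg]
    ring_nf
  rw [DSof, hmodulus, hphase]
  push_cast
  ring

/-- `D^S` is real and `γ D^S = ((η₁-η₂)² + (ξ₁-ξ₂)²) cosh(2(η₁φ₁+η₂φ₂))
+ ((η₁+η₂)² + (ξ₁-ξ₂)²) cosh(2(η₁φ₁-η₂φ₂)) - 4η₁η₂ cos(2(ψ₁-ψ₂))`. -/
theorem stmt_14 (η₁ η₂ : ℝ) (hη₁ : 0 < η₁) (hη₂ : 0 < η₂) (ξ₁ ξ₂ φ₁ φ₂ ψ₁ ψ₂ : ℝ) :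
    (DSof η₁ η₂ ξ₁ ξ₂ φ₁ φ₂ ψ₁ ψ₂).im = 0 ∧
      ((2 * η₁ * η₂ * ((η₁ + η₂) ^ 2 + (ξ₁ - ξ₂) ^ 2) : ℝ) : ℂ) *
          DSof η₁ η₂ ξ₁ ξ₂ φ₁ φ₂ ψ₁ ψ₂ =
        ((((η₁ - η₂) ^ 2 + (ξ₁ - ξ₂) ^ 2) * Real.cosh (2 * (η₁ * φ₁ + η₂ * φ₂)) +
            ((η₁ + η₂) ^ 2 + (ξ₁ - ξ₂) ^ 2) * Real.cosh (2 * (η₁ * φ₁ - η₂ * φ₂)) -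
            4 * η₁ * η₂ * Real.cos (2 * (ψ₁ - ψ₂)) : ℝ) : ℂ) := by
  have hP : (η₁ + η₂) ^ 2 + (ξ₁ - ξ₂) ^ 2 ≠ 0 := by positivity
  rw [DSof_eq_ofReal]
  refine ⟨Complex.ofReal_im _, ?_⟩
  rw [← Complex.ofReal_mul]
  congr 1
  field_simp
  ring
end
end
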